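/- Let C be the closed unit disk centered at (0,1), C1 a disk with boundary through (3x/2, 0) and (5x/2, 0), and C2 a disk with boundary through (7x/2, 0) and (9x/2, 0), where both C1, C2 have centers strictly below the x-axis. If C, C1, C2 are pairwise externally tangent, then x = 2·sqrt((4/945)(7 − 4√3)) ≈ 0.03486. -/

import Mathlib

/-!
The center of a circle through `(p, 0)` and `(q, 0)` lies over the midpoint `(p + q) / 2`, and
`p q` is the power of the origin with respect to it. External tangency to the unit circle centered
at `(0, 1)` then forces `r = p q / 2 - c₂` for the radius `r` and the height `c₂` of the center, and
this in turn determines `c₂`. For the two circles of the theorem the centers are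
`(2x, 15x²/16 - 1/15)` and `(4x, 63x²/16 - 1/63)`, and their mutual tangency becomes a quadratic in
`x²` with roots `16 (7 ± 4√3) / 945`. The larger root is excluded because the first center lies
below the x-axis, i.e. `x² < 16/225`.
-/

noncomputable def pt (x y : ℝ) : EuclideanSpace ℝ (Fin 2) := WithLp.toLp 2 ![x, y]

lemma dist_sq_eq_fin_two (u v : EuclideanSpace ℝ (Fin 2)) :
    dist u v ^ 2 = (u 0 - v 0) ^ 2 + (u 1 - v 1) ^ 2 := by
  rw [PiLp.dist_sq_eq_of_L2, Fin.sum_univ_two, Real.dist_eq, Real.dist_eq, sq_abs, sq_abs]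

@[simp] lemma pt_apply_zero (a b : ℝ) : pt a b 0 = a := rfl

@[simp] lemma pt_apply_one (a b : ℝ) : pt a b 1 = b := rfl

section CircleThroughTwoPoints

variable {c : EuclideanSpace ℝ (Fin 2)} {p q r : ℝ}

lemma sq_radius_eq (hp : dist c (pt p 0) = r) : r ^ 2 = (c 0 - p) ^ 2 + c 1 ^ 2 := by
  simp [← hp, dist_sq_eq_fin_two]

lemma center_fst_eq_midpoint (hpq : p ≠ q) (hp : dist c (pt p 0) = r)
    (hq : dist c (pt q 0) = r) : c 0 = (p + q) / 2 := by
  have h : (q - p) * (2 * c 0 - (p + q)) = 0 := by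
    linear_combination sq_radius_eq hq - sq_radius_eq hp
  have := (mul_eq_zero.mp h).resolve_left (sub_ne_zero.mpr hpq.symm)
  linarith

lemma radius_eq_of_tangent_unit_circle (hpq : p ≠ q) (hp : dist c (pt p 0) = r)
    (hq : dist c (pt q 0) = r) (htan : dist (pt 0 1) c = 1 + r) : r = p * q / 2 - c 1 := by
  have hc := center_fst_eq_midpoint hpq hp hq
  have htan' : (1 + r) ^ 2 = c 0 ^ 2 + (1 - c 1) ^ 2 := by
    simp [← htan, dist_sq_eq_fin_two]
  have hp' := sq_radius_eq hp
  rw [hc] at htan' hp'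
  linear_combination (htan' - hp') / 2

lemma center_snd_eq_of_tangent_unit_circle (hp₀ : p ≠ 0) (hq₀ : q ≠ 0) (hpq : p ≠ q)
    (hp : dist c (pt p 0) = r) (hq : dist c (pt q 0) = r) (htan : dist (pt 0 1) c = 1 + r) :
    c 1 = p * q / 4 - (q - p) ^ 2 / (4 * p * q) := by
  have hc := center_fst_eq_midpoint hpq hp hq
  have hr := radius_eq_of_tangent_unit_circle hpq hp hq htan
  have h := sq_radius_eq hp
  rw [hc, hr] at h
  field_simp
  linear_combination -4 * h

end CircleThroughTwoPoints

lemma eq_of_quartic_of_sq_lt {x : ℝ} (hx : 0 < x) (hsmall : x ^ 2 < 16 / 225)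
    (hquartic : 893025 * x ^ 4 - 211680 * x ^ 2 + 256 = 0) :
    x = 2 * √((4 / 945) * (7 - 4 * √3)) := by
  have hs : √3 ^ 2 = 3 := Real.sq_sqrt (by norm_num)
  have hfactor : (x ^ 2 - 16 * (7 - 4 * √3) / 945) * (x ^ 2 - 16 * (7 + 4 * √3) / 945) = 0 := by
    linear_combination hquartic / 893025 - (4096 / 893025) * hs
  have hx2 : x ^ 2 = 2 ^ 2 * ((4 / 945) * (7 - 4 * √3)) := by
    rcases mul_eq_zero.mp hfactor with h | h
    · linear_combination h
    · nlinarith [Real.sqrt_nonneg 3]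
  rw [← Real.sqrt_sq hx.le, hx2, Real.sqrt_mul (by norm_num), Real.sqrt_sq (by norm_num)]

theorem three_tangent_disks_general (x : ℝ) (hx : 0 < x)
    (c₁ c₂ : EuclideanSpace ℝ (Fin 2)) (r₁ r₂ : ℝ)
    (hc₁ : c₁ 1 < 0)
    (h₁ : dist c₁ (pt (3 * x / 2) 0) = r₁)
    (h₂ : dist c₁ (pt (5 * x / 2) 0) = r₁)
    (h₃ : dist c₂ (pt (7 * x / 2) 0) = r₂)
    (h₄ : dist c₂ (pt (9 * x / 2) 0) = r₂)
    (htan₁ : dist (pt 0 1) c₁ = 1 + r₁)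
    (htan₂ : dist (pt 0 1) c₂ = 1 + r₂)
    (htan₁₂ : dist c₁ c₂ = r₁ + r₂) :
    x = 2 * Real.sqrt ((4 / 945) * (7 - 4 * Real.sqrt 3)) := by
  have h35 : 3 * x / 2 ≠ 5 * x / 2 := by linarith
  have h79 : 7 * x / 2 ≠ 9 * x / 2 := by linarith
  have ha₁ := center_fst_eq_midpoint h35 h₁ h₂
  have ha₂ := center_fst_eq_midpoint h79 h₃ h₄
  have hrad₁ := radius_eq_of_tangent_unit_circle h35 h₁ h₂ htan₁
  have hrad₂ := radius_eq_of_tangent_unit_circle h79 h₃ h₄ htan₂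
  have hb₁ : c₁ 1 = 15 * x ^ 2 / 16 - 1 / 15 := by
    rw [center_snd_eq_of_tangent_unit_circle (by positivity) (by positivity) h35 h₁ h₂ htan₁]
    field_simp
    ring
  have hb₂ : c₂ 1 = 63 * x ^ 2 / 16 - 1 / 63 := by
    rw [center_snd_eq_of_tangent_unit_circle (by positivity) (by positivity) h79 h₃ h₄ htan₂]
    field_simp
    ring
  have hquartic : 893025 * x ^ 4 - 211680 * x ^ 2 + 256 = 0 := by
    have h := dist_sq_eq_fin_two c₁ c₂
    rw [htan₁₂, hrad₁, hrad₂, ha₁, ha₂, hb₁, hb₂] at h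
    linear_combination 60480 * h
  have hsmall : x ^ 2 < 16 / 225 := by
    rw [hb₁] at hc₁
    linarith
  exact eq_of_quartic_of_sq_lt hx hsmall hquartic

/-- Lemma 4: if the unit disk centered at `(0,1)`, a disk through `(3x/2,0)`
and `(5x/2,0)`, and a disk through `(7x/2,0)` and `(9x/2,0)` (both with
centers strictly below the x-axis) are pairwise externally tangent, then
`x = 2√((4/945)(7 − 4√3))`. -/
theorem three_tangent_disks (x : ℝ) (hx : 0 < x)
    (c₁ c₂ : EuclideanSpace ℝ (Fin 2)) (r₁ r₂ : ℝ)
    (hr₁ : 0 < r₁) (hr₂ : 0 < r₂)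
    (hc₁ : c₁ 1 < 0) (hc₂ : c₂ 1 < 0)
    (h₁ : dist c₁ (pt (3 * x / 2) 0) = r₁)
    (h₂ : dist c₁ (pt (5 * x / 2) 0) = r₁)
    (h₃ : dist c₂ (pt (7 * x / 2) 0) = r₂)
    (h₄ : dist c₂ (pt (9 * x / 2) 0) = r₂)
    (htan₁ : dist (pt 0 1) c₁ = 1 + r₁)
    (htan₂ : dist (pt 0 1) c₂ = 1 + r₂)
    (htan₁₂ : dist c₁ c₂ = r₁ + r₂) :
    x = 2 * Real.sqrt ((4 / 945) * (7 - 4 * Real.sqrt 3)) :=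
  three_tangent_disks_general x hx c₁ c₂ r₁ r₂ hc₁ h₁ h₂ h₃ h₄ htan₁ htan₂ htan₁₂
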